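/- Let X and Y be locally compact Hausdorff spaces, μ a Radon measure over X, and f a μ-measurable function defined μ-almost everywhere on X with values in P(Y) (where P(Y) carries the Borel σ-algebra of the weak topology). Then for every continuous function ψ : X×Y → ℝ with compact support, the function x ↦ ∫ ψ(x,y) d f(x)(y) is μ-measurable. -/

import Mathlib

/-! Because `ψ` vanishes outside a compact set, its slices `ψ(x, ·)` depend continuously on `x`
in the sup norm, and they range over a separable set (the image of the compact projection of
`tsupport ψ`, together with `0`). On that range times `X`, `(g, x) ↦ ∫ g d(f x)` is a
Carathéodory function: 1-Lipschitz in `g` because `f x` is a probability measure, and measurable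
in `x` by definition of the weak topology. Carathéodory functions are jointly measurable, and the
integral in question is this one composed with `x ↦ (ψ(x, ·), x)`. -/

open MeasureTheory Topology

noncomputable section

def ProbRadon (Y : Type*) [TopologicalSpace Y] [MeasurableSpace Y] : Type _ :=
  {ν : Measure Y // IsProbabilityMeasure ν ∧ ν.Regular}

instance (Y : Type*) [TopologicalSpace Y] [MeasurableSpace Y] :
    TopologicalSpace (ProbRadon Y) :=
  ⨅ k : {k : Y → ℝ // Continuous k ∧ HasCompactSupport k},
    TopologicalSpace.induced (fun ν : ProbRadon Y => ∫ y, k.1 y ∂ν.1) inferInstance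

instance (Y : Type*) [TopologicalSpace Y] [MeasurableSpace Y] :
    MeasurableSpace (ProbRadon Y) := borel (ProbRadon Y)

open scoped BoundedContinuousFunction

instance (Y : Type*) [TopologicalSpace Y] [MeasurableSpace Y] : BorelSpace (ProbRadon Y) :=
  ⟨rfl⟩

theorem ProbRadon.continuous_integral {Y : Type*} [TopologicalSpace Y] [MeasurableSpace Y]
    {k : Y → ℝ} (hk : Continuous k) (hkc : HasCompactSupport k) :
    Continuous fun ν : ProbRadon Y => ∫ y, k y ∂ν.1 :=
  continuous_iInf_dom (i := ⟨k, hk, hkc⟩) continuous_induced_dom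

theorem BoundedContinuousFunction.lipschitzWith_integral {Y : Type*} [TopologicalSpace Y]
    [MeasurableSpace Y] [OpensMeasurableSpace Y] (ν : Measure Y) [IsProbabilityMeasure ν] :
    LipschitzWith 1 fun g : Y →ᵇ ℝ => ∫ y, g y ∂ν := by
  refine LipschitzWith.of_dist_le_mul fun g h => ?_
  rw [NNReal.coe_one, one_mul, dist_eq_norm, dist_eq_norm,
    ← integral_sub (g.integrable ν) (h.integrable ν)]
  exact (g - h).norm_integral_le_norm ν

section Slice

variable {X Y : Type*} [TopologicalSpace X] [TopologicalSpace Y] {ψ : X × Y → ℝ}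

theorem HasCompactSupport.comp_prodMk_left (hψc : HasCompactSupport ψ)
    (x : X) : HasCompactSupport fun y => ψ (x, y) := by
  have hclosed : IsClosed ((fun y => (x, y)) ⁻¹' tsupport ψ) :=
    (isClosed_tsupport ψ).preimage (Continuous.prodMk_right x)
  have hsub : tsupport (fun y => ψ (x, y)) ⊆ (fun y => (x, y)) ⁻¹' tsupport ψ :=
    closure_minimal (fun y hy => subset_tsupport ψ hy) hclosed
  exact (hψc.image continuous_snd).of_isClosed_subset (isClosed_tsupport _)
    fun y hy => ⟨(x, y), hsub hy, rfl⟩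

namespace BoundedContinuousFunction

def curryOfCompactSupport (hψ : Continuous ψ) (hψc : HasCompactSupport ψ) (x : X) : Y →ᵇ ℝ :=
  ofCompactSupport (fun y => ψ (x, y)) (hψ.comp (.prodMk_right x)) (hψc.comp_prodMk_left x)

variable (hψ : Continuous ψ) (hψc : HasCompactSupport ψ)

theorem continuous_curryOfCompactSupport : Continuous (curryOfCompactSupport hψ hψc) := by
  refine continuous_iff_continuousAt.mpr fun x₀ => tendsto_iff_tendstoUniformly.mpr ?_
  have hL : IsCompact (Prod.snd '' tsupport ψ) := hψc.image continuous_snd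
  have hunif := ContinuousMap.tendsto_iff_forall_isCompact_tendstoUniformlyOn.mp
    ((ContinuousMap.curry ⟨ψ, hψ⟩).continuous.tendsto x₀) _ hL
  intro u hu
  filter_upwards [hunif u hu] with x hx y
  by_cases hy : y ∈ Prod.snd '' tsupport ψ
  · exact hx y hy
  · have hzero : ∀ x, ψ (x, y) = 0 := fun x =>
      image_eq_zero_of_notMem_tsupport fun h => hy ⟨(x, y), h, rfl⟩
    change (ψ (x₀, y), ψ (x, y)) ∈ u
    rw [hzero, hzero]
    exact refl_mem_uniformity hu

theorem isSeparable_range_curryOfCompactSupport :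
    TopologicalSpace.IsSeparable (Set.range (curryOfCompactSupport hψ hψc)) := by
  have hK : IsCompact (Prod.fst '' tsupport ψ) := hψc.image continuous_fst
  refine ((hK.image (continuous_curryOfCompactSupport hψ hψc)).insert 0).isSeparable.mono ?_
  rintro _ ⟨x, rfl⟩
  by_cases hx : x ∈ Prod.fst '' tsupport ψ
  · exact Set.mem_insert_of_mem _ ⟨x, hx, rfl⟩
  · refine Set.mem_insert_iff.mpr (Or.inl (ext fun y => ?_))
    exact (image_eq_zero_of_notMem_tsupport fun h => hx ⟨(x, y), h, rfl⟩ : ψ (x, y) = 0)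

end BoundedContinuousFunction

end Slice

open BoundedContinuousFunction in
theorem measurable_integral_of_hasCompactSupport {X Y : Type*} [TopologicalSpace X]
    [MeasurableSpace X] [OpensMeasurableSpace X] [TopologicalSpace Y] [MeasurableSpace Y]
    [OpensMeasurableSpace Y] {f : X → ProbRadon Y} (hf : Measurable f) {ψ : X × Y → ℝ}
    (hψ : Continuous ψ) (hψc : HasCompactSupport ψ) :
    Measurable fun x => ∫ y, ψ (x, y) ∂(f x).1 := by
  let S := Set.range (curryOfCompactSupport hψ hψc)
  let : MeasurableSpace S := borel S
  have : BorelSpace S := ⟨rfl⟩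
  have := (isSeparable_range_curryOfCompactSupport hψ hψc).separableSpace
  let u : S → X → ℝ := fun g x => ∫ y, (g : Y →ᵇ ℝ) y ∂(f x).1
  have hu_cont : ∀ x, Continuous fun g => u g x := fun x =>
    haveI := (f x).2.1
    (lipschitzWith_integral (f x).1).continuous.comp continuous_subtype_val
  have hu_meas : ∀ g, Measurable (u g) := by
    rintro ⟨_, x', rfl⟩
    exact (ProbRadon.continuous_integral (hψ.comp (.prodMk_right x'))
      (hψc.comp_prodMk_left x')).measurable.comp hf
  have hslice : Measurable fun x => (⟨curryOfCompactSupport hψ hψc x, x, rfl⟩ : S) :=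
    ((continuous_curryOfCompactSupport hψ hψc).subtype_mk _).measurable
  exact (measurable_uncurry_of_continuous_of_measurable hu_cont hu_meas).comp
    (hslice.prodMk measurable_id)

theorem youngFunction_integral_aemeasurable_general
    (X Y : Type*) [TopologicalSpace X]
    [MeasurableSpace X] [BorelSpace X]
    [TopologicalSpace Y]
    [MeasurableSpace Y] [BorelSpace Y]
    (μ : Measure X)
    (f : X → ProbRadon Y) (hf : AEMeasurable f μ)
    (ψ : X × Y → ℝ) (hψ : Continuous ψ) (hψc : HasCompactSupport ψ) :
    AEMeasurable (fun x => ∫ y, ψ (x, y) ∂(f x).1) μ :=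
  (measurable_integral_of_hasCompactSupport hf.measurable_mk hψ hψc).aemeasurable.congr <| by
    filter_upwards [hf.ae_eq_mk] with x hx
    rw [hx]

/-- Let `X` and `Y` be locally compact Hausdorff spaces, `μ` a Radon
measure over `X`, and `f` a `μ`-measurable function defined `μ`-almost everywhere on `X`
with values in `P(Y)` (with the Borel σ-algebra of the weak topology).  Then for every
continuous `ψ : X × Y → ℝ` with compact support, the function
`x ↦ ∫ ψ(x, y) d f(x)(y)` is `μ`-measurable. -/
theorem youngFunction_integral_aemeasurable
    (X Y : Type*) [TopologicalSpace X] [LocallyCompactSpace X] [T2Space X]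
    [MeasurableSpace X] [BorelSpace X]
    [TopologicalSpace Y] [LocallyCompactSpace Y] [T2Space Y]
    [MeasurableSpace Y] [BorelSpace Y]
    (μ : Measure X) (hμ : μ.Regular)
    (f : X → ProbRadon Y) (hf : AEMeasurable f μ)
    (ψ : X × Y → ℝ) (hψ : Continuous ψ) (hψc : HasCompactSupport ψ) :
    AEMeasurable (fun x => ∫ y, ψ (x, y) ∂(f x).1) μ :=
  youngFunction_integral_aemeasurable_general X Y μ f hf ψ hψ hψc

end
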